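/- Let θ be a congruence on the Płonka sum A of a semilattice direct system of groups. For each i ∈ I let N i := {a ∈ G i : θ ⟨i,a⟩ ⟨i,1⟩}, where 1 is the identity of G i. Then: (i) S_θ is a semilattice congruence on I; (ii) each N i is a normal subgroup of G i; (iii) for all i, j ∈ I, a ∈ N i implies p_{i,i⊔j}(a) ∈ N (i⊔j), and if (i,j) ∈ S_θ then a ∈ N i if and only if p_{i,i⊔j}(a) ∈ N (i⊔j); (iv) for all i, j ∈ I, a ∈ G i, b ∈ G j: θ ⟨i,a⟩ ⟨j,b⟩ if and only if (i,j) ∈ S_θ and p_{i,i⊔j}(a) · (p_{j,i⊔j}(b))⁻¹ ∈ N (i⊔j). -/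

import Mathlib

/-! Płonka sum of a semilattice direct system of groups.

`I` is a join-semilattice, `G i` are groups, and `p i j h : G i →* G j` (for `h : i ≤ j`)
are the transition homomorphisms. The Płonka sum is the sigma type `Σ i, G i` with
multiplication `⟨i,a⟩·⟨j,b⟩ = ⟨i⊔j, p_{i,i⊔j}(a) · p_{j,i⊔j}(b)⟩` and inversion
`⟨i,a⟩⁻¹ = ⟨i,a⁻¹⟩` (a Clifford semigroup). -/

variable {I : Type*} [SemilatticeSup I] {G : I → Type*} [∀ i, Group (G i)]

/-- Multiplication of the Płonka sum. -/
def pmul (p : ∀ i j : I, i ≤ j → (G i →* G j)) (x y : Σ i, G i) : Σ i, G i :=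
  ⟨x.1 ⊔ y.1, p x.1 (x.1 ⊔ y.1) le_sup_left x.2 * p y.1 (x.1 ⊔ y.1) le_sup_right y.2⟩

/-- Inversion of the Płonka sum. -/
def pinv (x : Σ i, G i) : Σ i, G i := ⟨x.1, x.2⁻¹⟩

/-- `θ` is a congruence on the Płonka sum: an equivalence relation compatible with
multiplication and inversion. -/
def IsCong (p : ∀ i j : I, i ≤ j → (G i →* G j))
    (θ : (Σ i, G i) → (Σ i, G i) → Prop) : Prop :=
  Equivalence θ ∧
    (∀ x x' y y', θ x x' → θ y y' → θ (pmul p x y) (pmul p x' y')) ∧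
    (∀ x x', θ x x' → θ (pinv x) (pinv x'))

/-- `S_θ`: the pairs of indices related by `θ`. -/
def Srel (θ : (Σ i, G i) → (Σ i, G i) → Prop) (i j : I) : Prop :=
  ∃ (a : G i) (b : G j), θ ⟨i, a⟩ ⟨j, b⟩

/-- `C_θ`. -/
def Crel (θ : (Σ i, G i) → (Σ i, G i) → Prop) (i j : I) : Prop :=
  Srel θ i (i ⊔ j) ∧ Srel θ j (i ⊔ j)

/-- A semilattice congruence on `I`: an equivalence relation compatible with `⊔`. -/
def IsSemilatticeCong {I : Type*} [SemilatticeSup I] (C : I → I → Prop) : Prop :=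
  Equivalence C ∧ ∀ i₁ j₁ i₂ j₂, C i₁ j₁ → C i₂ j₂ → C (i₁ ⊔ i₂) (j₁ ⊔ j₂)

/-- The class of the identity in the fiber over `i`. -/
def Nset (θ : (Σ i, G i) → (Σ i, G i) → Prop) (i : I) : Set (G i) :=
  {a : G i | θ ⟨i, a⟩ ⟨i, 1⟩}

/-! Multiplying `⟨i,1⟩ θ ⟨j,1⟩` by `⟨i,a⟩` shows that every element is related to its image in the
fibre over `i ⊔ j`, and `(i,j) ∈ S_θ` yields `⟨i,1⟩ θ ⟨j,1⟩` by multiplying a related pair with its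
inverse. So related elements can be moved to the common fibre `i ⊔ j`, where `θ` is the coset
relation of the identity class, a normal subgroup by the congruence laws. -/

theorem Equivalence.rel_congr {α : Sort*} {r : α → α → Prop} (e : Equivalence r) {x x' y y' : α}
    (hx : r x x') (hy : r y y') : r x y ↔ r x' y' :=
  ⟨fun h => e.trans (e.symm hx) (e.trans h hy), fun h => e.trans hx (e.trans h (e.symm hy))⟩

section PlonkaSum

variable {p : ∀ i j : I, i ≤ j → (G i →* G j)}

theorem pmul_mk_one {i j : I} (a : G i) :
    pmul p ⟨i, a⟩ ⟨j, 1⟩ = ⟨i ⊔ j, p i (i ⊔ j) le_sup_left a⟩ := by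
  simp [pmul]

theorem pmul_one_mk {i j : I} (b : G j) :
    pmul p ⟨i, 1⟩ ⟨j, b⟩ = ⟨i ⊔ j, p j (i ⊔ j) le_sup_right b⟩ := by
  simp [pmul]

theorem pmul_one_one {i j : I} : pmul p (⟨i, 1⟩ : Σ i, G i) ⟨j, 1⟩ = ⟨i ⊔ j, 1⟩ := by
  rw [pmul_mk_one, map_one]

variable (hid : ∀ (i : I) (h : i ≤ i) (a : G i), p i i h a = a)
include hid

theorem pmul_mk_of_le {i j : I} (h : i ≤ j) (a : G i) (b : G j) :
    pmul p ⟨i, a⟩ ⟨j, b⟩ = ⟨j, p i j h a * b⟩ := by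
  suffices ∀ k (hk : k = j) (h₁ : i ≤ k) (h₂ : j ≤ k),
      (⟨k, p i k h₁ a * p j k h₂ b⟩ : Σ i, G i) = ⟨j, p i j h a * b⟩ from
    this _ (sup_eq_right.mpr h) _ _
  rintro k rfl h₁ h₂
  rw [hid]

theorem pmul_mk_mk {i : I} (a b : G i) : pmul p ⟨i, a⟩ ⟨i, b⟩ = ⟨i, a * b⟩ := by
  rw [pmul_mk_of_le hid le_rfl, hid]

end PlonkaSum

namespace IsCong

variable {p : ∀ i j : I, i ≤ j → (G i →* G j)} {θ : (Σ i, G i) → (Σ i, G i) → Prop}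

theorem equivalence (hθ : IsCong p θ) : Equivalence θ := hθ.1

theorem rel_pmul (hθ : IsCong p θ) {x x' y y'} (hx : θ x x') (hy : θ y y') :
    θ (pmul p x y) (pmul p x' y') :=
  hθ.2.1 _ _ _ _ hx hy

theorem rel_pinv (hθ : IsCong p θ) {x x'} (h : θ x x') : θ (pinv x) (pinv x') :=
  hθ.2.2 _ _ h

variable (hθ : IsCong p θ) (hid : ∀ (i : I) (h : i ≤ i) (a : G i), p i i h a = a)
include hθ hid

theorem rel_one_one_of_srel {i j : I} (h : Srel θ i j) : θ ⟨i, 1⟩ ⟨j, 1⟩ := by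
  obtain ⟨a, b, hab⟩ := h
  have h := hθ.rel_pmul hab (hθ.rel_pinv hab)
  rwa [pinv, pinv, pmul_mk_mk hid, pmul_mk_mk hid, mul_inv_cancel, mul_inv_cancel] at h

theorem srel_iff_rel_one_one {i j : I} : Srel θ i j ↔ θ ⟨i, 1⟩ ⟨j, 1⟩ :=
  ⟨hθ.rel_one_one_of_srel hid, fun h => ⟨1, 1, h⟩⟩

theorem rel_mk_sup_left {i j : I} (h : θ ⟨i, 1⟩ ⟨j, 1⟩) (a : G i) :
    θ ⟨i, a⟩ ⟨i ⊔ j, p i (i ⊔ j) le_sup_left a⟩ := by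
  have h := hθ.rel_pmul (hθ.equivalence.refl ⟨i, a⟩) h
  rwa [pmul_mk_mk hid, mul_one, pmul_mk_one] at h

theorem rel_mk_sup_right {i j : I} (h : θ ⟨i, 1⟩ ⟨j, 1⟩) (b : G j) :
    θ ⟨j, b⟩ ⟨i ⊔ j, p j (i ⊔ j) le_sup_right b⟩ := by
  have h := hθ.rel_pmul (hθ.equivalence.symm h) (hθ.equivalence.refl ⟨j, b⟩)
  rwa [pmul_mk_mk hid, one_mul, pmul_one_mk] at h

theorem rel_iff_rel_sup {i j : I} (h : θ ⟨i, 1⟩ ⟨j, 1⟩) (a : G i) (b : G j) :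
    θ ⟨i, a⟩ ⟨j, b⟩ ↔
      θ ⟨i ⊔ j, p i (i ⊔ j) le_sup_left a⟩ ⟨i ⊔ j, p j (i ⊔ j) le_sup_right b⟩ :=
  hθ.equivalence.rel_congr (hθ.rel_mk_sup_left hid h a) (hθ.rel_mk_sup_right hid h b)

theorem rel_mk_mk_iff_mul_inv_mem {k : I} (x y : G k) :
    θ ⟨k, x⟩ ⟨k, y⟩ ↔ x * y⁻¹ ∈ Nset θ k := by
  constructor
  · intro h
    have h := hθ.rel_pmul h (hθ.equivalence.refl ⟨k, y⁻¹⟩)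
    rwa [pmul_mk_mk hid, pmul_mk_mk hid, mul_inv_cancel] at h
  · intro h
    have h := hθ.rel_pmul h (hθ.equivalence.refl ⟨k, y⟩)
    rwa [pmul_mk_mk hid, pmul_mk_mk hid, inv_mul_cancel_right, one_mul] at h

def identityClass (i : I) : Subgroup (G i) where
  carrier := Nset θ i
  one_mem' := hθ.equivalence.refl _
  mul_mem' {a b} ha hb := by
    have h := hθ.rel_pmul ha hb
    rwa [pmul_mk_mk hid, pmul_mk_mk hid, mul_one] at h
  inv_mem' {a} ha := by
    have h := hθ.rel_pinv ha
    rwa [pinv, pinv, inv_one] at h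

theorem coe_identityClass (i : I) : (hθ.identityClass hid i : Set (G i)) = Nset θ i := rfl

theorem identityClass_normal (i : I) : (hθ.identityClass hid i).Normal where
  conj_mem a ha g := by
    have h := hθ.rel_pmul (hθ.rel_pmul (hθ.equivalence.refl ⟨i, g⟩) ha)
      (hθ.equivalence.refl ⟨i, g⁻¹⟩)
    rwa [pmul_mk_mk hid, pmul_mk_mk hid, pmul_mk_mk hid, pmul_mk_mk hid, mul_one,
      mul_inv_cancel] at h

theorem map_mem_nset {i k : I} (h : i ≤ k) {a : G i} (ha : a ∈ Nset θ i) :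
    p i k h a ∈ Nset θ k := by
  have h' := hθ.rel_pmul ha (hθ.equivalence.refl (⟨k, 1⟩ : Σ i, G i))
  rwa [pmul_mk_of_le hid h, pmul_mk_of_le hid h, mul_one, mul_one, map_one] at h'

theorem mem_nset_iff_map_mem {i j : I} (h : Srel θ i j) (a : G i) :
    a ∈ Nset θ i ↔ p i (i ⊔ j) le_sup_left a ∈ Nset θ (i ⊔ j) := by
  have h₁ := hθ.rel_one_one_of_srel hid h
  have ha := hθ.rel_mk_sup_left hid h₁ a
  have h₀ := hθ.rel_mk_sup_left hid h₁ 1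
  rw [map_one] at h₀
  exact hθ.equivalence.rel_congr ha h₀

theorem isSemilatticeCong_srel : IsSemilatticeCong (Srel θ) := by
  have hS : Srel θ = fun i j => θ ⟨i, 1⟩ ⟨j, 1⟩ := by
    ext
    exact hθ.srel_iff_rel_one_one hid
  have e := hθ.equivalence
  rw [hS]
  refine ⟨⟨fun i => e.refl _, e.symm, e.trans⟩, fun i₁ j₁ i₂ j₂ h₁ h₂ => ?_⟩
  simpa only [pmul_one_one] using hθ.rel_pmul h₁ h₂

theorem rel_mk_iff {i j : I} (a : G i) (b : G j) :
    θ ⟨i, a⟩ ⟨j, b⟩ ↔ Srel θ i j ∧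
      p i (i ⊔ j) le_sup_left a * (p j (i ⊔ j) le_sup_right b)⁻¹ ∈ Nset θ (i ⊔ j) := by
  rw [← hθ.rel_mk_mk_iff_mul_inv_mem hid]
  constructor
  · intro h
    have hS : Srel θ i j := ⟨a, b, h⟩
    exact ⟨hS, (hθ.rel_iff_rel_sup hid (hθ.rel_one_one_of_srel hid hS) a b).mp h⟩
  · rintro ⟨hS, h⟩
    exact (hθ.rel_iff_rel_sup hid (hθ.rel_one_one_of_srel hid hS) a b).mpr h

end IsCong

theorem congruence_determined_by_normal_subgroups_general
    (p : ∀ i j : I, i ≤ j → (G i →* G j))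
    (hid : ∀ (i : I) (h : i ≤ i) (a : G i), p i i h a = a)
    (θ : (Σ i, G i) → (Σ i, G i) → Prop) (hθ : IsCong p θ) :
    -- (i)
    IsSemilatticeCong (Srel θ) ∧
    -- (ii)
    (∀ i : I, ∃ H : Subgroup (G i), H.Normal ∧ (H : Set (G i)) = Nset θ i) ∧
    -- (iii)
    (∀ (i j : I) (a : G i), a ∈ Nset θ i → p i (i ⊔ j) le_sup_left a ∈ Nset θ (i ⊔ j)) ∧
    (∀ i j : I, Srel θ i j → ∀ a : G i,
      a ∈ Nset θ i ↔ p i (i ⊔ j) le_sup_left a ∈ Nset θ (i ⊔ j)) ∧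
    -- (iv)
    (∀ (i j : I) (a : G i) (b : G j),
      θ ⟨i, a⟩ ⟨j, b⟩ ↔ Srel θ i j ∧
        p i (i ⊔ j) le_sup_left a * (p j (i ⊔ j) le_sup_right b)⁻¹ ∈ Nset θ (i ⊔ j)) :=
  ⟨hθ.isSemilatticeCong_srel hid,
    fun i => ⟨hθ.identityClass hid i, hθ.identityClass_normal hid i, hθ.coe_identityClass hid i⟩,
    fun _ _ _ => hθ.map_mem_nset hid le_sup_left,
    fun _ _ h => hθ.mem_nset_iff_map_mem hid h,
    fun _ _ => hθ.rel_mk_iff hid⟩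

/-- Analysis of a congruence `θ` on the Płonka sum of a semilattice direct system of
groups: (i) `S_θ` is a semilattice congruence on `I`; (ii) each `N i := [1]_{θ_{ii}}` is
(the carrier of) a normal subgroup of `G i`; (iii) the family `N` is compatible with the
transition maps, with equivalence along pairs in `S_θ`; (iv) `θ` is recovered from
`S_θ` and `N`. -/
theorem congruence_determined_by_normal_subgroups
    (p : ∀ i j : I, i ≤ j → (G i →* G j))
    (hid : ∀ (i : I) (h : i ≤ i) (a : G i), p i i h a = a)
    (hcomp : ∀ (i j k : I) (hij : i ≤ j) (hjk : j ≤ k) (a : G i),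
      p j k hjk (p i j hij a) = p i k (hij.trans hjk) a)
    (θ : (Σ i, G i) → (Σ i, G i) → Prop) (hθ : IsCong p θ) :
    -- (i)
    IsSemilatticeCong (Srel θ) ∧
    -- (ii)
    (∀ i : I, ∃ H : Subgroup (G i), H.Normal ∧ (H : Set (G i)) = Nset θ i) ∧
    -- (iii)
    (∀ (i j : I) (a : G i), a ∈ Nset θ i → p i (i ⊔ j) le_sup_left a ∈ Nset θ (i ⊔ j)) ∧
    (∀ i j : I, Srel θ i j → ∀ a : G i,
      a ∈ Nset θ i ↔ p i (i ⊔ j) le_sup_left a ∈ Nset θ (i ⊔ j)) ∧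
    -- (iv)
    (∀ (i j : I) (a : G i) (b : G j),
      θ ⟨i, a⟩ ⟨j, b⟩ ↔ Srel θ i j ∧
        p i (i ⊔ j) le_sup_left a * (p j (i ⊔ j) le_sup_right b)⁻¹ ∈ Nset θ (i ⊔ j)) :=
  congruence_determined_by_normal_subgroups_general p hid θ hθ
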